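/- arXiv:2204.03316 — 2 statements merged into one kernel-verified Lean document; each statement's English description precedes it below -/
import Mathlib

section
/- Let T be the tangent space {U C* + D V* : C ∈ ℂ^{n₂×r}, D ∈ ℂ^{n₁×r}} at a rank-r matrix with left and right singular factors U ∈ ℂ^{n₁×r}, V ∈ ℂ^{n₂×r} satisfying ‖U‖_{2,∞}² ≤ c_s μ r / n and ‖V‖_{2,∞}² ≤ c_s μ r / n. Then for each orthonormal Hankel basis matrix H_a, the orthogonal projection P_T onto T satisfies ‖P_T H_a‖_F² ≤ 2 c_s μ r / n. -/
open scoped BigOperators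
open Matrix

/-- The Hankel mapping: `(hankel x) i j = x (i + j)` (0-indexed). -/
noncomputable def hankel (n₁ n₂ : ℕ) (x : Fin (n₁ + n₂ - 1) → ℂ) :
    Matrix (Fin n₁) (Fin n₂) ℂ :=
  fun i j => x ⟨i.1 + j.1, by have := i.2; have := j.2; omega⟩

/-- `ς_t`: the number of entries on the `t`-th antidiagonal of an `n₁ × n₂` matrix. -/
def antidiagCount (n₁ n₂ : ℕ) (t : Fin (n₁ + n₂ - 1)) : ℕ :=
  (Finset.univ.filter (fun p : Fin n₁ × Fin n₂ => p.1.1 + p.2.1 = t.1)).card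

/-- `H_a := (1/√ς_a) · H(e_a)`, the `a`-th orthonormal Hankel basis matrix. -/
noncomputable def hankelBasis (n₁ n₂ : ℕ) (a : Fin (n₁ + n₂ - 1)) :
    Matrix (Fin n₁) (Fin n₂) ℂ :=
  ((Real.sqrt (antidiagCount n₁ n₂ a))⁻¹ : ℂ) • hankel n₁ n₂ (Pi.single a 1)

/-- Frobenius norm squared as the real part of `trace (Mᴴ M)`. -/
lemma fro_trace {m n : ℕ} (M : Matrix (Fin m) (Fin n) ℂ) :
    ∑ i, ∑ j, ‖M i j‖ ^ 2 = (Matrix.trace (Mᴴ * M)).re := by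
  rw [Finset.sum_comm]
  simp only [Matrix.trace, Matrix.diag, Matrix.mul_apply, Matrix.conjTranspose_apply,
    Complex.re_sum]
  refine Finset.sum_congr rfl fun j _ => Finset.sum_congr rfl fun i _ => ?_
  have h : star (M i j) = (starRingEnd ℂ) (M i j) := rfl
  rw [h, ← Complex.normSq_eq_conj_mul_self]
  simp only [Complex.ofReal_re]
  rw [Complex.normSq_eq_norm_sq]

/-- `‖P_T H‖_F² ≤ ‖Uᴴ H‖_F² + ‖H V‖_F²` for orthonormal `U`, `V`. -/
lemma decomp_bound {n₁ n₂ r : ℕ}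
    (U : Matrix (Fin n₁) (Fin r) ℂ) (V : Matrix (Fin n₂) (Fin r) ℂ)
    (H : Matrix (Fin n₁) (Fin n₂) ℂ)
    (hU : Uᴴ * U = 1) (hV : Vᴴ * V = 1) :
    ∑ i, ∑ j, ‖(U * Uᴴ * H + H * (V * Vᴴ) - U * Uᴴ * H * (V * Vᴴ)) i j‖ ^ 2
      ≤ (∑ k, ∑ j, ‖(Uᴴ * H) k j‖ ^ 2) + (∑ i, ∑ k, ‖(H * V) i k‖ ^ 2) := by
  have hU' : ∀ {p : ℕ} (X : Matrix (Fin r) (Fin p) ℂ), Uᴴ * (U * X) = X := by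
    intro p X; rw [← Matrix.mul_assoc, hU, Matrix.one_mul]
  set A := U * (Uᴴ * H) with hA
  set M := H * (V * Vᴴ) with hM
  set B := M - U * (Uᴴ * M) with hB
  have hsum : U * Uᴴ * H + H * (V * Vᴴ) - U * Uᴴ * H * (V * Vᴴ) = A + B := by
    rw [hA, hB, hM]; simp only [Matrix.mul_assoc]; abel
  have hBA : Bᴴ * A = 0 := by
    rw [hB, hA]
    simp only [Matrix.conjTranspose_sub, Matrix.conjTranspose_mul,
      Matrix.conjTranspose_conjTranspose, Matrix.sub_mul, Matrix.mul_assoc, hU']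
    simp
  have hAB : Aᴴ * B = 0 := by
    have h : Aᴴ * B = (Bᴴ * A)ᴴ := by
      simp [Matrix.conjTranspose_mul]
    rw [h, hBA]; simp
  have key : ∑ i, ∑ j, ‖(A + B) i j‖ ^ 2
      = (∑ i, ∑ j, ‖A i j‖ ^ 2) + (∑ i, ∑ j, ‖B i j‖ ^ 2) := by
    rw [fro_trace (A + B), fro_trace A, fro_trace B]
    rw [Matrix.conjTranspose_add, Matrix.add_mul, Matrix.mul_add, Matrix.mul_add, hAB, hBA]
    simp [Matrix.trace_add]
  have hAeq : (∑ i, ∑ j, ‖A i j‖ ^ 2) = ∑ k, ∑ j, ‖(Uᴴ * H) k j‖ ^ 2 := by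
    rw [fro_trace, fro_trace]
    congr 1
    rw [hA]
    simp only [Matrix.conjTranspose_mul, Matrix.mul_assoc, hU']
  have hBB : Bᴴ * B = Mᴴ * M - (Uᴴ * M)ᴴ * (Uᴴ * M) := by
    rw [hB]
    simp only [Matrix.conjTranspose_sub, Matrix.conjTranspose_mul,
      Matrix.conjTranspose_conjTranspose, Matrix.sub_mul, Matrix.mul_sub,
      Matrix.mul_assoc, hU']
    abel
  have hBle : (∑ i, ∑ j, ‖B i j‖ ^ 2) ≤ ∑ i, ∑ j, ‖M i j‖ ^ 2 := by
    have h1 : (∑ i, ∑ j, ‖B i j‖ ^ 2)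
        = (∑ i, ∑ j, ‖M i j‖ ^ 2) - (∑ k, ∑ j, ‖(Uᴴ * M) k j‖ ^ 2) := by
      rw [fro_trace B, fro_trace M, fro_trace (Uᴴ * M), hBB, Matrix.trace_sub, Complex.sub_re]
    have h2 : 0 ≤ ∑ k, ∑ j, ‖(Uᴴ * M) k j‖ ^ 2 := by positivity
    linarith
  have hMeq : (∑ i, ∑ j, ‖M i j‖ ^ 2) = ∑ i, ∑ k, ‖(H * V) i k‖ ^ 2 := by
    rw [fro_trace, fro_trace]
    congr 1
    have hMN : M = (H * V) * Vᴴ := by rw [hM, Matrix.mul_assoc]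
    rw [hMN, Matrix.conjTranspose_mul, Matrix.conjTranspose_conjTranspose,
      Matrix.mul_assoc, Matrix.trace_mul_comm, Matrix.mul_assoc, Matrix.mul_assoc,
      hV, Matrix.mul_one]
  rw [hsum, key, hAeq]
  linarith [hBle, hMeq.le]

/-- The projection `P_T X = U U* X + X V V* − U U* X V V*` onto the tangent space of
the rank-`r` manifold satisfies `‖P_T H_a‖_F² ≤ 2 c_s μ r / n` for each Hankel basis
matrix `H_a`, given `μ`-incoherent `U`, `V` with orthonormal columns. -/
theorem stmt7 (n₁ n₂ r : ℕ) (h₁ : 0 < n₁) (h₂ : 0 < n₂) (μ cs : ℝ)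
    (hμ : 0 < μ) (hcs : 0 < cs)
    (U : Matrix (Fin n₁) (Fin r) ℂ) (V : Matrix (Fin n₂) (Fin r) ℂ)
    (hU : Uᴴ * U = 1) (hV : Vᴴ * V = 1)
    (hUinc : ∀ i, ∑ k, ‖U i k‖ ^ 2 ≤ cs * μ * r / ((n₁ + n₂ - 1 : ℕ) : ℝ))
    (hVinc : ∀ j, ∑ k, ‖V j k‖ ^ 2 ≤ cs * μ * r / ((n₁ + n₂ - 1 : ℕ) : ℝ))
    (PT : Matrix (Fin n₁) (Fin n₂) ℂ → Matrix (Fin n₁) (Fin n₂) ℂ)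
    (hPT : ∀ X, PT X = U * Uᴴ * X + X * (V * Vᴴ) - U * Uᴴ * X * (V * Vᴴ)) :
    ∀ a : Fin (n₁ + n₂ - 1),
      ∑ i, ∑ j, ‖PT (hankelBasis n₁ n₂ a) i j‖ ^ 2
        ≤ 2 * cs * μ * r / ((n₁ + n₂ - 1 : ℕ) : ℝ) := by
  intro a
  set H := hankelBasis n₁ n₂ a with hHdef
  set ς : ℕ := antidiagCount n₁ n₂ a with hςdef
  set c : ℝ := (Real.sqrt ς)⁻¹ with hcdef
  set bnd : ℝ := cs * μ * r / ((n₁ + n₂ - 1 : ℕ) : ℝ) with hbnddef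
  have hbnd : 0 ≤ bnd := by positivity
  have hc0 : 0 ≤ c := by positivity
  have hςpos : 0 < ς := by
    rw [hςdef, antidiagCount]
    apply Finset.card_pos.2
    have ha := a.2
    by_cases h : a.1 < n₁
    · exact ⟨(⟨a.1, h⟩, ⟨0, h₂⟩), by simp⟩
    · exact ⟨(⟨n₁ - 1, by omega⟩, ⟨a.1 - (n₁ - 1), by omega⟩), by
        simp only [Finset.mem_filter, Finset.mem_univ, true_and]; omega⟩
  have hc2 : c ^ 2 = (ς : ℝ)⁻¹ := by
    rw [hcdef, inv_pow, Real.sq_sqrt (Nat.cast_nonneg ς)]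
  -- entries of H
  have hHe : ∀ (i : Fin n₁) (j : Fin n₂),
      H i j = (c : ℂ) * (if i.1 + j.1 = a.1 then 1 else 0) := by
    intro i j
    rw [hHdef, hankelBasis]
    rw [← hςdef, Matrix.smul_apply, smul_eq_mul, hcdef]
    push_cast
    congr 1
    simp only [hankel, Pi.single_apply]
    congr 1
    simp [Fin.ext_iff]
  -- U side
  have hUH : ∀ (j : Fin n₂) (k : Fin r), (Uᴴ * H) k j
      = if h : j.1 ≤ a.1 ∧ a.1 - j.1 < n₁
        then (c : ℂ) * (starRingEnd ℂ) (U ⟨a.1 - j.1, h.2⟩ k) else 0 := by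
    intro j k
    rw [Matrix.mul_apply]
    split_ifs with h
    · rw [Finset.sum_eq_single (⟨a.1 - j.1, h.2⟩ : Fin n₁)]
      · rw [Matrix.conjTranspose_apply, hHe, if_pos (show a.1 - j.1 + j.1 = a.1 by omega)]
        rw [mul_one, mul_comm]
        rfl
      · intro i _ hne
        rw [Matrix.conjTranspose_apply, hHe, if_neg, mul_zero, mul_zero]
        intro hcon; exact hne (Fin.ext (show i.1 = a.1 - j.1 by omega))
      · intro h'; exact absurd (Finset.mem_univ _) h'
    · apply Finset.sum_eq_zero; intro i _
      rw [Matrix.conjTranspose_apply, hHe, if_neg, mul_zero, mul_zero]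
      have := i.2; omega
  have hU2 : (∑ k, ∑ j, ‖(Uᴴ * H) k j‖ ^ 2) ≤ bnd := by
    rw [Finset.sum_comm]
    have hrow : ∀ j : Fin n₂, ∑ k, ‖(Uᴴ * H) k j‖ ^ 2
        ≤ if j.1 ≤ a.1 ∧ a.1 - j.1 < n₁ then c ^ 2 * bnd else 0 := by
      intro j
      by_cases h : j.1 ≤ a.1 ∧ a.1 - j.1 < n₁
      · rw [if_pos h]
        have he : ∀ k, ‖(Uᴴ * H) k j‖ ^ 2 = c ^ 2 * ‖U ⟨a.1 - j.1, h.2⟩ k‖ ^ 2 := by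
          intro k
          rw [hUH, dif_pos h]
          simp [norm_mul, mul_pow, Complex.norm_real, abs_of_nonneg hc0]
        rw [Finset.sum_congr rfl fun k _ => he k, ← Finset.mul_sum]
        exact mul_le_mul_of_nonneg_left (hUinc _) (by positivity)
      · rw [if_neg h]
        apply le_of_eq
        apply Finset.sum_eq_zero; intro k _
        rw [hUH, dif_neg h]; simp
    have hcard : ((Finset.univ.filter
        (fun j : Fin n₂ => j.1 ≤ a.1 ∧ a.1 - j.1 < n₁)).card : ℝ) ≤ (ς : ℝ) := by
      have : (Finset.univ.filter (fun j : Fin n₂ => j.1 ≤ a.1 ∧ a.1 - j.1 < n₁)).card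
          ≤ ς := by
        rw [hςdef, antidiagCount]
        apply Finset.card_le_card_of_injOn
          (fun j => (⟨min (a.1 - j.1) (n₁ - 1), by omega⟩, j))
        · intro j hj
          simp only [Finset.mem_coe, Finset.mem_filter, Finset.mem_univ, true_and] at hj ⊢
          omega
        · intro j1 _ j2 _ hEq
          exact congrArg Prod.snd hEq
      exact_mod_cast this
    calc ∑ j, ∑ k, ‖(Uᴴ * H) k j‖ ^ 2
        ≤ ∑ j : Fin n₂, (if j.1 ≤ a.1 ∧ a.1 - j.1 < n₁ then c ^ 2 * bnd else 0) :=
          Finset.sum_le_sum fun j _ => hrow j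
      _ = ((Finset.univ.filter
            (fun j : Fin n₂ => j.1 ≤ a.1 ∧ a.1 - j.1 < n₁)).card : ℝ) * (c ^ 2 * bnd) := by
          rw [Finset.sum_ite, Finset.sum_const_zero, add_zero, Finset.sum_const,
            nsmul_eq_mul]
      _ ≤ (ς : ℝ) * (c ^ 2 * bnd) :=
          mul_le_mul_of_nonneg_right hcard (by positivity)
      _ = bnd := by
          rw [hc2, ← mul_assoc, mul_inv_cancel₀ (by exact_mod_cast hςpos.ne'), one_mul]
  -- V side
  have hHV : ∀ (i : Fin n₁) (k : Fin r), (H * V) i k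
      = if h : i.1 ≤ a.1 ∧ a.1 - i.1 < n₂
        then (c : ℂ) * V ⟨a.1 - i.1, h.2⟩ k else 0 := by
    intro i k
    rw [Matrix.mul_apply]
    split_ifs with h
    · rw [Finset.sum_eq_single (⟨a.1 - i.1, h.2⟩ : Fin n₂)]
      · rw [hHe, if_pos (show i.1 + (a.1 - i.1) = a.1 by omega), mul_one]
      · intro j _ hne
        rw [hHe, if_neg, mul_zero, zero_mul]
        intro hcon; exact hne (Fin.ext (show j.1 = a.1 - i.1 by omega))
      · intro h'; exact absurd (Finset.mem_univ _) h'
    · apply Finset.sum_eq_zero; intro j _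
      rw [hHe, if_neg, mul_zero, zero_mul]
      have := j.2; omega
  have hV2 : (∑ i, ∑ k, ‖(H * V) i k‖ ^ 2) ≤ bnd := by
    have hrow : ∀ i : Fin n₁, ∑ k, ‖(H * V) i k‖ ^ 2
        ≤ if i.1 ≤ a.1 ∧ a.1 - i.1 < n₂ then c ^ 2 * bnd else 0 := by
      intro i
      by_cases h : i.1 ≤ a.1 ∧ a.1 - i.1 < n₂
      · rw [if_pos h]
        have he : ∀ k, ‖(H * V) i k‖ ^ 2 = c ^ 2 * ‖V ⟨a.1 - i.1, h.2⟩ k‖ ^ 2 := by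
          intro k
          rw [hHV, dif_pos h]
          simp [norm_mul, mul_pow, Complex.norm_real, abs_of_nonneg hc0]
        rw [Finset.sum_congr rfl fun k _ => he k, ← Finset.mul_sum]
        exact mul_le_mul_of_nonneg_left (hVinc _) (by positivity)
      · rw [if_neg h]
        apply le_of_eq
        apply Finset.sum_eq_zero; intro k _
        rw [hHV, dif_neg h]; simp
    have hcard : ((Finset.univ.filter
        (fun i : Fin n₁ => i.1 ≤ a.1 ∧ a.1 - i.1 < n₂)).card : ℝ) ≤ (ς : ℝ) := by
      have : (Finset.univ.filter (fun i : Fin n₁ => i.1 ≤ a.1 ∧ a.1 - i.1 < n₂)).card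
          ≤ ς := by
        rw [hςdef, antidiagCount]
        apply Finset.card_le_card_of_injOn
          (fun i => (i, ⟨min (a.1 - i.1) (n₂ - 1), by omega⟩))
        · intro i hi
          simp only [Finset.mem_coe, Finset.mem_filter, Finset.mem_univ, true_and] at hi ⊢
          omega
        · intro i1 _ i2 _ hEq
          exact congrArg Prod.fst hEq
      exact_mod_cast this
    calc ∑ i, ∑ k, ‖(H * V) i k‖ ^ 2
        ≤ ∑ i : Fin n₁, (if i.1 ≤ a.1 ∧ a.1 - i.1 < n₂ then c ^ 2 * bnd else 0) :=
          Finset.sum_le_sum fun i _ => hrow i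
      _ = ((Finset.univ.filter
            (fun i : Fin n₁ => i.1 ≤ a.1 ∧ a.1 - i.1 < n₂)).card : ℝ) * (c ^ 2 * bnd) := by
          rw [Finset.sum_ite, Finset.sum_const_zero, add_zero, Finset.sum_const,
            nsmul_eq_mul]
      _ ≤ (ς : ℝ) * (c ^ 2 * bnd) :=
          mul_le_mul_of_nonneg_right hcard (by positivity)
      _ = bnd := by
          rw [hc2, ← mul_assoc, mul_inv_cancel₀ (by exact_mod_cast hςpos.ne'), one_mul]
  have hdecomp : ∑ i, ∑ j, ‖PT H i j‖ ^ 2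
      ≤ (∑ k, ∑ j, ‖(Uᴴ * H) k j‖ ^ 2) + (∑ i, ∑ k, ‖(H * V) i k‖ ^ 2) := by
    rw [hPT]
    exact decomp_bound U V H hU hV
  have hfin : 2 * cs * μ * r / ((n₁ + n₂ - 1 : ℕ) : ℝ) = bnd + bnd := by
    rw [hbnddef]; ring
  rw [hfin]
  linarith
end

section
/- Let v ∈ ℂⁿ, let Γ_k(v) keep the k entries of v of largest magnitude (zeroing the rest) with support S, and suppose w ∈ ℂⁿ has support of size at most m < k. Then for any index i ∉ S with i in the support of w, one has |v_i|² ≤ ‖v − w‖₂² / (k − m). -/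
open scoped BigOperators

/-- Hard-thresholding tail bound: if `S` (of size `k`) is the support of `Γ_k(v)`,
i.e. it consists of `k` largest-magnitude entries of `v`, and `w` has support of
size at most `m < k`, then for any `i ∉ S` with `w i ≠ 0`,
`|v_i|² ≤ ‖v − w‖₂² / (k − m)`. -/
theorem stmt18 (n k m : ℕ) (hm : m < k)
    (v w : Fin n → ℂ) (S : Finset (Fin n))
    (hScard : S.card = k)
    (hStop : ∀ i ∈ S, ∀ j ∉ S, ‖v j‖ ≤ ‖v i‖)
    (hw : (Finset.univ.filter (fun i => w i ≠ 0)).card ≤ m) :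
    ∀ i : Fin n, i ∉ S → w i ≠ 0 →
      ‖v i‖ ^ 2 ≤ (∑ j, ‖v j - w j‖ ^ 2) / ((k : ℝ) - m) := by
  intro i hiS hwi
  set W := Finset.univ.filter (fun i => w i ≠ 0) with hW
  set T := S \ W with hT
  have hTcard : k - m ≤ T.card := by
    have h1 : S.card - W.card ≤ T.card := Finset.le_card_sdiff W S
    omega
  have hpos : (0:ℝ) < (k:ℝ) - m := by
    have : (m:ℝ) < k := by exact_mod_cast hm
    linarith
  rw [le_div_iff₀ hpos]
  have hbound : ((k:ℝ) - m) * ‖v i‖ ^ 2 ≤ ∑ j ∈ T, ‖v j - w j‖ ^ 2 := by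
    have hstep : ∀ j ∈ T, ‖v i‖ ^ 2 ≤ ‖v j - w j‖ ^ 2 := by
      intro j hj
      obtain ⟨hjS, hjW⟩ := Finset.mem_sdiff.mp hj
      have hwj : w j = 0 := by
        by_contra h
        exact hjW (Finset.mem_filter.mpr ⟨Finset.mem_univ _, h⟩)
      rw [hwj, sub_zero]
      have := hStop j hjS i hiS
      exact pow_le_pow_left₀ (norm_nonneg _) this 2
    calc ((k:ℝ) - m) * ‖v i‖ ^ 2
        ≤ (T.card : ℝ) * ‖v i‖ ^ 2 := by
          apply mul_le_mul_of_nonneg_right _ (by positivity)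
          have : ((k - m : ℕ) : ℝ) ≤ T.card := by exact_mod_cast hTcard
          have hkm : ((k - m : ℕ) : ℝ) = (k:ℝ) - m := by
            have := Nat.cast_sub hm.le (R := ℝ); linarith
          linarith
      _ = ∑ _j ∈ T, ‖v i‖ ^ 2 := by rw [Finset.sum_const, nsmul_eq_mul]
      _ ≤ ∑ j ∈ T, ‖v j - w j‖ ^ 2 := Finset.sum_le_sum hstep
  have hsub : ∑ j ∈ T, ‖v j - w j‖ ^ 2 ≤ ∑ j, ‖v j - w j‖ ^ 2 :=
    Finset.sum_le_sum_of_subset_of_nonneg (Finset.subset_univ T)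
      (fun _ _ _ => by positivity)
  linarith
end
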